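/- arXiv:2410.18795 — 7 statements merged into one kernel-verified Lean document; each statement's English description precedes it below -/
import Mathlib

section
/- Let G be a countable group and K a finite symmetric subset containing the identity such that the subgroup ⟨K⟩ satisfies |B_{4n}(K)| ≤ C₀² |B_n(K)| for all n ≥ 1 (e.g., via the doubling property with constant C₀). Fix m₀ ≥ C₀² and n₀ ∈ ℕ. If 𝒞 ⊂ G is such that the sets {cK^{n₀}}_{c∈𝒞} are pairwise disjoint, then for every n ∈ [0, n₀] and every g ∈ G, the number of c ∈ 𝒞 with dist_K(g, cK^{2n₀}) ≤ n is at most m₀. -/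
open scoped Pointwise

/-- The translated tile `c K^m`, as a set: `g ∈ tile K c m ↔ ρ_K(c,g) ≤ m`
(for `K` finite symmetric containing the identity). -/
def tile {G : Type*} [Group G] [DecidableEq G] (K : Finset G) (c : G) (m : ℕ) : Set G :=
  {x : G | c⁻¹ * x ∈ K ^ m}

/-- The set of centers `c ∈ 𝒞` whose expanded tile `c K^{2n₀}` lies within word-metric
distance `n` of `g`, i.e. `dist_K(g, c K^{2n₀}) ≤ n`. -/
def degSet {G : Type*} [Group G] [DecidableEq G] (K : Finset G) (C : Set G)
    (n₀ n : ℕ) (g : G) : Set G :=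
  {c ∈ C | ∃ s ∈ tile K c (2 * n₀), g⁻¹ * s ∈ K ^ n}

/-!
Each tile `c K^{n₀}` with `c` counted at `g` lies in the ball `g K^{4n₀}`: a point of it is
within `n + 2n₀ + n₀ ≤ 4n₀` of `g` by the triangle inequality through the point of
`c K^{2n₀}` near `g`. These tiles are disjoint and each has `|K^{n₀}|` elements, so `m` of them
force `m |K^{n₀}| ≤ |K^{4n₀}| ≤ C₀² |K^{n₀}|`, i.e. `m ≤ C₀² ≤ m₀`.
-/

open Finset

theorem Set.encard_le_coe_of_forall_finset_card_le {α : Type*} {s : Set α} {m : ℕ}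
    (h : ∀ t : Finset α, ↑t ⊆ s → #t ≤ m) : s.encard ≤ m := by
  by_contra! hlt
  obtain ⟨t, hts, htcard⟩ := Set.exists_subset_encard_eq (Order.add_one_le_of_lt hlt)
  have htfin : t.Finite := Set.finite_of_encard_eq_coe (k := m + 1) (by simpa using htcard)
  have := h htfin.toFinset (by simpa using hts)
  rw [← Nat.cast_le (α := ℕ∞), ← htfin.encard_eq_coe_toFinset_card, htcard] at this
  norm_cast at this
  omega

theorem Finset.card_mul_card_le_of_pairwiseDisjoint_smul {G : Type*} [Group G] [DecidableEq G]
    {T A B : Finset G} (hdisj : (T : Set G).PairwiseDisjoint (· • A))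
    (hsub : ∀ c ∈ T, c • A ⊆ B) : #T * #A ≤ #B :=
  calc #T * #A = #(T.biUnion (· • A)) := by
        rw [card_biUnion hdisj]; simp [card_smul_finset]
    _ ≤ #B := card_le_card (biUnion_subset.2 hsub)

section Tiles

variable {G : Type*} [Group G] [DecidableEq G] {K : Finset G}

theorem coe_smul_pow_eq_tile (K : Finset G) (c : G) (m : ℕ) :
    ((c • K ^ m : Finset G) : Set G) = tile K c m := by
  ext x
  simp [tile, coe_smul_finset, Set.mem_smul_set_iff_inv_smul_mem, -coe_pow]

theorem tile_mono (h1 : (1 : G) ∈ K) (c : G) {a b : ℕ} (hab : a ≤ b) :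
    tile K c a ⊆ tile K c b :=
  fun _ hx => pow_subset_pow_right h1 hab hx

theorem tile_subset_tile_of_mem (hsym : K⁻¹ = K) {c g s : G} {a b : ℕ}
    (hc : s ∈ tile K c a) (hg : s ∈ tile K g b) (d : ℕ) :
    tile K c d ⊆ tile K g (b + a + d) := by
  intro x hx
  have hsc : (c⁻¹ * s)⁻¹ ∈ K ^ a := by simpa [← inv_pow, hsym] using inv_mem_inv hc
  have hmem := mul_mem_mul (mul_mem_mul hg hsc) hx
  rwa [← pow_add, ← pow_add, show g⁻¹ * s * (c⁻¹ * s)⁻¹ * (c⁻¹ * x) = g⁻¹ * x by group] at hmem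

theorem smul_pow_subset_of_mem_degSet (h1 : (1 : G) ∈ K) (hsym : K⁻¹ = K) {C : Set G}
    {n₀ n : ℕ} (hn : n ≤ n₀) {g c : G} (hc : c ∈ degSet K C n₀ n g) :
    c • K ^ n₀ ⊆ g • K ^ (4 * n₀) := by
  obtain ⟨-, s, hsc, hsg⟩ := hc
  rw [← coe_subset, coe_smul_pow_eq_tile, coe_smul_pow_eq_tile]
  exact (tile_subset_tile_of_mem hsym hsc hsg n₀).trans (tile_mono h1 g (by omega))

end Tiles

/-- Bounded degree lemma: if `|B_{4n}(K)| ≤ C₀² |B_n(K)|` for all `n ≥ 1`, `m₀ ≥ C₀²`,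
and the tiles `{c K^{n₀}}_{c ∈ 𝒞}` are pairwise disjoint, then for every `n ∈ [0, n₀]`
and every `g`, at most `m₀` centers `c ∈ 𝒞` satisfy `dist_K(g, c K^{2n₀}) ≤ n`. -/
theorem bounded_degree {G : Type*} [Group G] [DecidableEq G]
    (K : Finset G) (h1 : (1 : G) ∈ K) (hsym : K⁻¹ = K)
    (C₀ : ℝ)
    (hC₀ : ∀ n : ℕ, 1 ≤ n →
      (((K ^ (4 * n) : Finset G)).card : ℝ) ≤ C₀ ^ 2 * (((K ^ n : Finset G)).card : ℝ))
    (m₀ n₀ : ℕ) (hm₀ : C₀ ^ 2 ≤ (m₀ : ℝ)) (hn₀ : 1 ≤ n₀)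
    (C : Set G)
    (hdisj : C.Pairwise fun c c' => Disjoint (tile K c n₀) (tile K c' n₀)) :
    ∀ n : ℕ, n ≤ n₀ → ∀ g : G, (degSet K C n₀ n g).encard ≤ (m₀ : ℕ∞) := by
  intro n hn g
  refine Set.encard_le_coe_of_forall_finset_card_le fun T hT => ?_
  have hdisjT : (T : Set G).PairwiseDisjoint (· • K ^ n₀) := fun c hc c' hc' hne => by
    rw [Function.onFun, ← disjoint_coe, coe_smul_pow_eq_tile, coe_smul_pow_eq_tile]
    exact hdisj (hT hc).1 (hT hc').1 hne
  have hpack : #T * #(K ^ n₀) ≤ #(K ^ (4 * n₀)) := by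
    rw [← card_smul_finset g (K ^ (4 * n₀))]
    exact card_mul_card_le_of_pairwiseDisjoint_smul hdisjT
      fun c hc => smul_pow_subset_of_mem_degSet h1 hsym hn (hT hc)
  have hpos : (0 : ℝ) < #(K ^ n₀) := by exact_mod_cast card_pos.2 ⟨1, one_mem_pow h1⟩
  have hreal : (#T : ℝ) * #(K ^ n₀) ≤ m₀ * #(K ^ n₀) :=
    calc (#T : ℝ) * #(K ^ n₀) ≤ #(K ^ (4 * n₀)) := by exact_mod_cast hpack
      _ ≤ C₀ ^ 2 * #(K ^ n₀) := hC₀ n₀ hn₀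
      _ ≤ m₀ * #(K ^ n₀) := by gcongr
  exact_mod_cast le_of_mul_le_mul_right hreal hpos
end

section
/- The finite extension property is invariant under topological conjugacy: if G is a countable group and X, Y are topologically conjugate G-subshifts, then X has the FEP if and only if Y has the FEP. -/
open Pointwise


/-- The shift action of `G` on configurations: `(σ^g x)(h) = x(g⁻¹ h)`. -/
def shiftMap {G A : Type*} [Group G] (g : G) (x : G → A) : G → A :=
  fun h => x (g⁻¹ * h)

/-- A subshift: a closed, shift-invariant set of configurations. -/
def IsSubshift {G A : Type*} [Group G] [TopologicalSpace A] (X : Set (G → A)) : Prop :=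
  IsClosed X ∧ ∀ g : G, ∀ x ∈ X, shiftMap g x ∈ X

/-- The pattern of shape `K` seen in `x` at position `g`, i.e. `g⁻¹ · x(gK)`. -/
def window {G A : Type*} [Mul G] (x : G → A) (g : G) (K : Finset G) : K → A :=
  fun k => x (g * (k : G))

/-- `X` has the finite extension property: for some finite `K ∋ e` and forbidden set
`ℱ ⊆ 𝒜^K` with `X = X_ℱ`, every pattern `w` on a set `S` that admits an extension `w'`
with no `ℱ`-violations at positions of `S` actually occurs in a point of `X`. -/
def HasFEP {G A : Type*} [Group G] (X : Set (G → A)) : Prop :=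
  ∃ (K : Finset G) (F : Set (K → A)), (1 : G) ∈ K ∧
    X = {x : G → A | ∀ g : G, window x g K ∉ F} ∧
    ∀ (S : Set G) (w : G → A),
      (∃ w' : G → A, (∀ g ∈ S, w' g = w g) ∧ ∀ g ∈ S, window w' g K ∉ F) →
      ∃ x ∈ X, ∀ g ∈ S, x g = w g

lemma cyl_subset_of_mem_nhds {G A : Type*} [TopologicalSpace A] [DiscreteTopology A]
    (x : G → A) (s : Set (G → A)) (hs : s ∈ nhds x) :
    ∃ D : Finset G, {x' : G → A | ∀ d ∈ D, x' d = x d} ⊆ s := by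
  classical
  rw [nhds_pi, Filter.mem_pi] at hs
  obtain ⟨I, hI, t, ht, hsub⟩ := hs
  refine ⟨hI.toFinset, fun x' hx' => hsub fun i hi => ?_⟩
  have h1 : x' i = x i := hx' i (hI.mem_toFinset.mpr hi)
  rw [h1]
  exact mem_of_mem_nhds (ht i)

lemma exists_block_code {G A B : Type*} [Group G]
    [TopologicalSpace A] [DiscreteTopology A] [Finite A]
    [TopologicalSpace B] [DiscreteTopology B]
    (X : Set (G → A)) (hXc : IsClosed X)
    (hXs : ∀ g : G, ∀ x ∈ X, shiftMap g x ∈ X)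
    (φ : (G → A) → (G → B)) (hφc : ContinuousOn φ X)
    (hφe : ∀ g : G, ∀ x ∈ X, φ (shiftMap g x) = shiftMap g (φ x)) :
    ∃ M : Finset G, (1:G) ∈ M ∧ ∀ x₁ ∈ X, ∀ x₂ ∈ X, ∀ g : G,
      (∀ m ∈ M, x₁ (g * m) = x₂ (g * m)) → φ x₁ g = φ x₂ g := by
  classical
  have point : ∀ x ∈ X, ∃ D : Finset G,
      ∀ x' ∈ X, (∀ d ∈ D, x' d = x d) → φ x' 1 = φ x 1 := by
    intro x hx
    have hcont : ContinuousWithinAt (fun x' => φ x' 1) X x :=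
      (continuous_apply (1:G)).continuousAt.comp_continuousWithinAt (hφc x hx)
    have hmem : (fun x' : G → A => φ x' 1) ⁻¹' {φ x 1} ∈ nhdsWithin x X :=
      hcont (by simp [mem_nhds_discrete])
    rw [mem_nhdsWithin] at hmem
    obtain ⟨U, hUo, hxU, hUsub⟩ := hmem
    obtain ⟨D, hD⟩ := cyl_subset_of_mem_nhds x U (hUo.mem_nhds hxU)
    refine ⟨D, fun x' hx' hagree => ?_⟩
    have : x' ∈ U ∩ X := ⟨hD hagree, hx'⟩
    simpa using hUsub this
  choose! D hD using point
  haveI : CompactSpace (G → A) := by infer_instance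
  have hXcomp : IsCompact X := hXc.isCompact
  have hU : ∀ x ∈ X, {x' : G → A | ∀ d ∈ D x, x' d = x d} ∈ nhds x := by
    intro x hx
    have hopen : IsOpen {x' : G → A | ∀ d ∈ D x, x' d = x d} := by
      have : {x' : G → A | ∀ d ∈ D x, x' d = x d}
          = Set.pi ↑(D x) (fun d => {x d}) := by
        ext x'; simp [Set.mem_pi]
      rw [this]
      exact isOpen_set_pi (D x).finite_toSet (fun _ _ => isOpen_discrete _)
    exact hopen.mem_nhds (fun d _ => rfl)
  obtain ⟨t, htX, hcover⟩ := hXcomp.elim_nhds_subcover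
    (fun x => {x' : G → A | ∀ d ∈ D x, x' d = x d}) hU
  refine ⟨insert 1 (t.sup D), Finset.mem_insert_self _ _, ?_⟩
  have key : ∀ x₁ ∈ X, ∀ x₂ ∈ X,
      (∀ m ∈ insert (1:G) (t.sup D), x₁ m = x₂ m) → φ x₁ 1 = φ x₂ 1 := by
    intro x₁ hx₁ x₂ hx₂ hagree
    have hx₁cov := hcover hx₁
    simp only [Set.mem_iUnion, Set.mem_setOf_eq] at hx₁cov
    obtain ⟨x, hxt, hx₁U⟩ := hx₁cov
    have hxX : x ∈ X := htX x hxt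
    have hsub : ∀ d ∈ D x, d ∈ insert (1:G) (t.sup D) := fun d hd =>
      Finset.mem_insert_of_mem (Finset.le_sup (f := D) hxt hd)
    have e1 : φ x₁ 1 = φ x 1 := hD x hxX x₁ hx₁ hx₁U
    have e2 : φ x₂ 1 = φ x 1 := hD x hxX x₂ hx₂ fun d hd => by
      rw [← hagree d (hsub d hd)]; exact hx₁U d hd
    rw [e1, e2]
  intro x₁ hx₁ x₂ hx₂ g hagree
  have s₁ : shiftMap g⁻¹ x₁ ∈ X := hXs g⁻¹ x₁ hx₁
  have s₂ : shiftMap g⁻¹ x₂ ∈ X := hXs g⁻¹ x₂ hx₂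
  have e : φ (shiftMap g⁻¹ x₁) 1 = φ (shiftMap g⁻¹ x₂) 1 := by
    apply key _ s₁ _ s₂
    intro m hm
    simpa [shiftMap] using hagree m hm
  have e1 : φ (shiftMap g⁻¹ x₁) 1 = φ x₁ g := by
    rw [hφe g⁻¹ x₁ hx₁]; simp [shiftMap]
  have e2 : φ (shiftMap g⁻¹ x₂) 1 = φ x₂ g := by
    rw [hφe g⁻¹ x₂ hx₂]; simp [shiftMap]
  rw [← e1, ← e2, e]

lemma hasFEP_transfer {G A B : Type*} [Group G] [DecidableEq G]
    [TopologicalSpace A] [DiscreteTopology A] [Finite A]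
    [TopologicalSpace B] [DiscreteTopology B] [Finite B]
    (X : Set (G → A)) (Y : Set (G → B)) (hX : IsSubshift X) (hY : IsSubshift Y)
    (φ : (G → A) → (G → B)) (ψ : (G → B) → (G → A))
    (hφc : ContinuousOn φ X) (hψc : ContinuousOn ψ Y)
    (hφm : ∀ x ∈ X, φ x ∈ Y) (hψm : ∀ y ∈ Y, ψ y ∈ X)
    (hφe : ∀ g : G, ∀ x ∈ X, φ (shiftMap g x) = shiftMap g (φ x))
    (hψe : ∀ g : G, ∀ y ∈ Y, ψ (shiftMap g y) = shiftMap g (ψ y))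
    (hinv₂ : ∀ y ∈ Y, φ (ψ y) = y)
    (hA : Nonempty (G → A)) (hB : Nonempty (G → B)) :
    HasFEP X → HasFEP Y := by
  classical
  rintro ⟨K, F, hK1, hXF, hext⟩
  obtain ⟨M, hM1, hM⟩ := exists_block_code X hX.1 hX.2 φ hφc hφe
  obtain ⟨N, hN1, hN⟩ := exists_block_code Y hY.1 hY.2 ψ hψc hψe
  have h1K' : (1:G) ∈ M * K * N := by
    simpa using Finset.mul_mem_mul (Finset.mul_mem_mul hM1 hK1) hN1
  refine ⟨M * K * N,
    {q : (M * K * N : Finset G) → B | ¬ ∃ y ∈ Y, ∀ k : (M * K * N : Finset G), y (k : G) = q k},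
    h1K', ?_, ?_⟩
  · ext y
    simp only [Set.mem_setOf_eq, not_not]
    constructor
    · intro hyY g
      refine ⟨shiftMap g⁻¹ y, hY.2 g⁻¹ y hyY, fun k => ?_⟩
      simp [shiftMap, window]
    · intro hy
      have hz : ∀ g : G, ∃ z ∈ Y, ∀ k ∈ M * K * N, z (g * k) = y (g * k) := by
        intro g
        obtain ⟨y₀, hy₀Y, hy₀⟩ := hy g
        refine ⟨shiftMap g y₀, hY.2 g y₀ hy₀Y, fun k hk => ?_⟩
        have := hy₀ ⟨k, hk⟩
        simpa [shiftMap, window] using this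
      choose z hzY hza using hz
      have key : ∀ g : G, ∀ p ∈ M * K, ψ (z (g * p)) (g * p) = ψ (z g) (g * p) := by
        intro g p hp
        refine hN _ (hzY _) _ (hzY g) (g * p) fun n hn => ?_
        have hnK' : n ∈ M * K * N := by
          simpa using Finset.mul_mem_mul (Finset.mul_mem_mul hM1 hK1) hn
        have h1 : z (g * p) (g * p * n) = y (g * p * n) := hza (g * p) n hnK'
        have h2 : z g (g * p * n) = y (g * p * n) := by
          have := hza g (p * n) (Finset.mul_mem_mul hp hn)
          rwa [← mul_assoc] at this
        rw [h1, h2]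
      set x : G → A := fun g => ψ (z g) g with hxdef
      have hxkey : ∀ g : G, ∀ p ∈ M * K, x (g * p) = ψ (z g) (g * p) := by
        intro g p hp; exact key g p hp
      have hxX : x ∈ X := by
        rw [hXF]
        intro g
        have hwin : window x g K = window (ψ (z g)) g K := by
          funext k
          exact hxkey g k (by simpa using Finset.mul_mem_mul hM1 k.2)
        rw [hwin]
        have hpsi : ψ (z g) ∈ X := hψm _ (hzY g)
        rw [hXF] at hpsi
        exact hpsi g
      have hyx : φ x = y := by
        funext g
        have e1 : φ x g = φ (ψ (z g)) g := by
          refine hM x hxX _ (hψm _ (hzY g)) g fun m hm => ?_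
          exact hxkey g m (by simpa using Finset.mul_mem_mul hm hK1)
        rw [e1, hinv₂ _ (hzY g)]
        have := hza g 1 h1K'
        simpa using this
      rw [← hyx]
      exact hφm x hxX
  · rintro S w ⟨w', hw'S, hw'F⟩
    have hz : ∀ g : G, ∃ z : G → B, g ∈ S → z ∈ Y ∧ ∀ k ∈ M * K * N, z (g * k) = w' (g * k) := by
      intro g
      by_cases hg : g ∈ S
      · have := hw'F g hg
        simp only [Set.mem_setOf_eq, not_not] at this
        obtain ⟨y₀, hy₀Y, hy₀⟩ := this
        refine ⟨shiftMap g y₀, fun _ => ⟨hY.2 g y₀ hy₀Y, fun k hk => ?_⟩⟩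
        have := hy₀ ⟨k, hk⟩
        simpa [shiftMap, window] using this
      · exact ⟨Classical.arbitrary _, fun h => absurd h hg⟩
    choose z hz using hz
    have hv : ∀ g : G, ∃ a : A, ∀ u ∈ Y, (∀ n ∈ N, u (g * n) = w' (g * n)) → ψ u g = a := by
      intro g
      by_cases h : ∃ u ∈ Y, ∀ n ∈ N, u (g * n) = w' (g * n)
      · obtain ⟨u₀, hu₀Y, hu₀⟩ := h
        refine ⟨ψ u₀ g, fun u hu hagree => ?_⟩
        exact hN u hu u₀ hu₀Y g fun n hn => (hagree n hn).trans (hu₀ n hn).symm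
      · exact ⟨Classical.arbitrary (G → A) g, fun u hu hagree => absurd ⟨u, hu, hagree⟩ h⟩
    choose v hv using hv
    have hgood : ∀ h ∈ {h : G | ∃ s ∈ S, ∃ m ∈ M, h = s * m}, window v h K ∉ F := by
      rintro h ⟨s, hs, m, hm, rfl⟩
      obtain ⟨hzY, hza⟩ := hz s hs
      have hkey : ∀ k : G, k ∈ K → v (s * m * k) = ψ (z s) (s * m * k) := by
        intro k hk
        refine (hv (s * m * k) (z s) hzY fun n hn => ?_).symm
        have := hza (m * k * n)
          (Finset.mul_mem_mul (Finset.mul_mem_mul hm hk) hn)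
        rw [← mul_assoc, ← mul_assoc] at this
        exact this
      have hwin : window v (s * m) K = window (ψ (z s)) (s * m) K := by
        funext k
        exact hkey k k.2
      rw [hwin]
      have hpsi : ψ (z s) ∈ X := hψm _ hzY
      rw [hXF] at hpsi
      exact hpsi (s * m)
    obtain ⟨x, hxX, hxv⟩ := hext {h : G | ∃ s ∈ S, ∃ m ∈ M, h = s * m} v
      ⟨v, fun _ _ => rfl, hgood⟩
    refine ⟨φ x, hφm x hxX, fun s hs => ?_⟩
    obtain ⟨hzY, hza⟩ := hz s hs
    have e1 : φ x s = φ (ψ (z s)) s := by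
      refine hM x hxX _ (hψm _ hzY) s fun m hm => ?_
      have hx1 : x (s * m) = v (s * m) := hxv (s * m) ⟨s, hs, m, hm, rfl⟩
      have hv1 : v (s * m) = ψ (z s) (s * m) := by
        refine (hv (s * m) (z s) hzY fun n hn => ?_).symm
        have hmMK : m ∈ M * K := by simpa using Finset.mul_mem_mul hm hK1
        have := hza (m * n) (Finset.mul_mem_mul hmMK hn)
        rwa [← mul_assoc] at this
      rw [hx1, hv1]
    rw [e1, hinv₂ _ hzY]
    have h2 := hza 1 h1K'
    rw [mul_one] at h2
    rw [h2]
    exact hw'S s hs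

lemma hasFEP_of_isEmpty {G A : Type*} [Group G] [IsEmpty (G → A)] (X : Set (G → A)) :
    HasFEP X :=
  ⟨{1}, ∅, Finset.mem_singleton_self 1, by ext x; exact isEmptyElim x,
    fun S w => isEmptyElim w⟩

/-- The finite extension property is invariant under topological conjugacy. -/
theorem fep_invariant_under_conjugacy {G A B : Type*} [Group G] [Countable G]
    [TopologicalSpace A] [DiscreteTopology A] [Finite A]
    [TopologicalSpace B] [DiscreteTopology B] [Finite B]
    (X : Set (G → A)) (Y : Set (G → B)) (hX : IsSubshift X) (hY : IsSubshift Y)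
    (φ : (G → A) → (G → B)) (ψ : (G → B) → (G → A))
    (hφc : ContinuousOn φ X) (hψc : ContinuousOn ψ Y)
    (hφm : ∀ x ∈ X, φ x ∈ Y) (hψm : ∀ y ∈ Y, ψ y ∈ X)
    (hφe : ∀ g : G, ∀ x ∈ X, φ (shiftMap g x) = shiftMap g (φ x))
    (hψe : ∀ g : G, ∀ y ∈ Y, ψ (shiftMap g y) = shiftMap g (ψ y))
    (hinv₁ : ∀ x ∈ X, ψ (φ x) = x) (hinv₂ : ∀ y ∈ Y, φ (ψ y) = y) :
    HasFEP X ↔ HasFEP Y := by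
  classical
  rcases isEmpty_or_nonempty (G → B) with hE | hNeB
  · haveI : IsEmpty (G → A) := ⟨fun x => IsEmpty.false (φ x)⟩
    exact iff_of_true (hasFEP_of_isEmpty X) (hasFEP_of_isEmpty Y)
  · have hNeA : Nonempty (G → A) := ⟨ψ (Classical.arbitrary _)⟩
    constructor
    · exact hasFEP_transfer X Y hX hY φ ψ hφc hψc hφm hψm hφe hψe hinv₂ hNeA hNeB
    · exact hasFEP_transfer Y X hY hX ψ φ hψc hφc hψm hφm hψe hφe hinv₁ hNeB hNeA
end

section
/- If X is a G-subshift with the finite extension property, then X is a strongly irreducible shift of finite type. In fact, if K is a finite symmetric set containing e witnessing the FEP (with forbidden patterns ℱ ⊂ 𝒜^K), then X is strongly irreducible with shape K⁴: for any E, F ⊂ G with EK⁴ ∩ F = ∅ and any u ∈ ℒ_E(X), v ∈ ℒ_F(X), the pattern u ∪ v lies in ℒ_{E∪F}(X). -/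
open scoped Pointwise

/-- `w` occurs in `X` on the set `S` (i.e. `w(S) ∈ ℒ_S(X)`). -/
def inLang {G A : Type*} (X : Set (G → A)) (S : Set G) (w : G → A) : Prop :=
  ∃ x ∈ X, ∀ g ∈ S, x g = w g

/-- If `X` has the FEP witnessed by a finite symmetric set `K ∋ e` with forbidden set
`ℱ`, then `X` is an SFT and is strongly irreducible with shape `K⁴`: for any `E, F` with
`EK⁴ ∩ F = ∅`, patterns in the language on `E` and `F` can be glued within `X`. -/
theorem fep_implies_strongly_irreducible_SFT {G A : Type*} [Group G] [DecidableEq G]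
    (X : Set (G → A)) (K : Finset G) (h1 : (1 : G) ∈ K) (hsym : K⁻¹ = K)
    (F : Set (K → A))
    (hX : X = {x : G → A | ∀ g : G, window x g K ∉ F})
    (hFEP : ∀ (S : Set G) (w : G → A),
      (∃ w' : G → A, (∀ g ∈ S, w' g = w g) ∧ ∀ g ∈ S, window w' g K ∉ F) →
      ∃ x ∈ X, ∀ g ∈ S, x g = w g) :
    (∃ (K' : Finset G) (F' : Set (K' → A)),
      X = {x : G → A | ∀ g : G, window x g K' ∉ F'}) ∧
    ∀ (E Fs : Set G) (u v : G → A), inLang X E u → inLang X Fs v →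
      (∀ g ∈ E, ∀ k ∈ (K ^ 4 : Finset G), g * k ∉ Fs) →
      ∃ x ∈ X, (∀ g ∈ E, x g = u g) ∧ (∀ g ∈ Fs, x g = v g) := by
  classical
  refine ⟨⟨K, F, hX⟩, ?_⟩
  intro E Fs u v hu hv hdis
  obtain ⟨xu, hxuX, hxu⟩ := hu
  obtain ⟨xv, hxvX, hxv⟩ := hv
  -- P g : g ∈ E K²
  set P : G → Prop := fun g => ∃ e ∈ E, ∃ k₁ ∈ K, ∃ k₂ ∈ K, g = e * k₁ * k₂ with hP
  set w : G → A := fun g => if P g then xu g else xv g with hw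
  set S : Set G := {g | (∀ k ∈ K, P (g * k)) ∨ (∀ k ∈ K, ¬ P (g * k))} with hS
  have hES : E ⊆ S := by
    intro g hg
    exact Or.inl fun k hk => ⟨g, hg, k, hk, 1, h1, by group⟩
  have hFnotP : ∀ g ∈ Fs, ∀ k ∈ K, ¬ P (g * k) := by
    intro g hg k hk ⟨e, he, k₁, hk₁, k₂, hk₂, heq⟩
    have hkinv : k⁻¹ ∈ K := by
      rw [← hsym]; exact Finset.inv_mem_inv hk
    have hmem : k₁ * k₂ * k⁻¹ * 1 ∈ (K ^ 4 : Finset G) := by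
      have : (K ^ 4 : Finset G) = K * K * K * K := by
        rw [pow_succ, pow_succ, pow_succ, pow_one]
      rw [this]
      exact Finset.mul_mem_mul (Finset.mul_mem_mul (Finset.mul_mem_mul hk₁ hk₂) hkinv) h1
    have := hdis e he _ hmem
    apply this
    have : g = e * (k₁ * k₂ * k⁻¹ * 1) := by
      rw [mul_one, show e * (k₁ * k₂ * k⁻¹) = (e * k₁ * k₂) * k⁻¹ by group, ← heq]
      group
    rw [← this]; exact hg
  have hFS : Fs ⊆ S := fun g hg => Or.inr (hFnotP g hg)
  have hPself : ∀ g ∈ Fs, ¬ P g := by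
    intro g hg h
    have := hFnotP g hg 1 h1
    rw [mul_one] at this
    exact this h
  have hwin : ∀ g ∈ S, window w g K ∉ F := by
    intro g hg
    rcases hg with hg | hg
    · have : window w g K = window xu g K := by
        funext k
        simp only [window, hw]
        rw [if_pos (hg k k.2)]
      rw [this]
      rw [hX] at hxuX
      exact hxuX g
    · have : window w g K = window xv g K := by
        funext k
        simp only [window, hw]
        rw [if_neg (hg k k.2)]
      rw [this]
      rw [hX] at hxvX
      exact hxvX g
  obtain ⟨x, hxX, hx⟩ := hFEP S w ⟨w, fun _ _ => rfl, hwin⟩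
  refine ⟨x, hxX, ?_, ?_⟩
  · intro g hg
    rw [hx g (hES hg)]
    have hPg : P g := ⟨g, hg, 1, h1, 1, h1, by group⟩
    simp only [hw, if_pos hPg]
    exact (hxu g hg).symm ▸ hxu g hg
  · intro g hg
    rw [hx g (hFS hg)]
    simp only [hw, if_neg (hPself g hg)]
    exact hxv g hg
end

section
/- Let G be a countable group, X a nonempty aperiodic G-subshift, and F ⊂ G a nonempty finite subset. Then there exists a homomorphism (continuous shift-commuting map) φ : X → {0,1}^G such that for every x ∈ X, writing φ(x) = χ_𝒞 for 𝒞 ⊂ G, the translates {cF}_{c∈𝒞} are pairwise disjoint and the translates {cFF⁻¹}_{c∈𝒞} cover G. -/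
open scoped Pointwise

/-!
Fix the finite symmetric set `S = F F⁻¹`. Call a set `V` of configurations `S`-separated if no
point of `V` is moved back into `V` by a shift `h ∈ S ∖ {1}`. Aperiodicity lets one separate each
`x ∈ X` from its finitely many shifts `σ^h x`, `h ∈ S ∖ {1}`, by a clopen cylinder, which is then
an `S`-separated neighbourhood of `x`. By compactness of `X`, finitely many of these are merged
greedily (a new point enters only if none of its `S`-shifts is already in) into one clopen
`S`-separated set `V` that every orbit in `X` visits within `S`. The set of visit times
`𝒞 = {c | σ^{c⁻¹} x ∈ V}` depends continuously and equivariantly on `x`; separation makes the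
translates `cF` disjoint and the visits make the `cFF⁻¹` cover `G`.
-/

lemma isClopen_set_pi_singleton {ι : Type*} {A : ι → Type*} [∀ i, TopologicalSpace (A i)]
    [∀ i, DiscreteTopology (A i)] {U : Set ι} (hU : U.Finite) (x : ∀ i, A i) :
    IsClopen (U.pi fun i => {x i}) :=
  ⟨isClosed_set_pi fun _ _ => isClosed_discrete _, isOpen_set_pi hU fun _ _ => isOpen_discrete _⟩

section

variable {G A : Type*} [Group G]

lemma shiftMap_shiftMap (g h : G) (x : G → A) :
    shiftMap g (shiftMap h x) = shiftMap (g * h) x := by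
  funext t
  simp [shiftMap, mul_assoc]

lemma shiftMap_one (x : G → A) : shiftMap (1 : G) x = x := by
  funext t
  simp [shiftMap]

lemma continuous_shiftMap [TopologicalSpace A] (g : G) :
    Continuous (shiftMap g : (G → A) → G → A) :=
  continuous_pi fun _ => continuous_apply _

def IsShiftSeparated (S : Set G) (V : Set (G → A)) : Prop :=
  ∀ v ∈ V, ∀ h ∈ S, h ≠ 1 → shiftMap h v ∉ V

lemma isShiftSeparated_empty (S : Set G) : IsShiftSeparated S (∅ : Set (G → A)) :=
  fun _ hv => hv.elim

lemma exists_isClopen_isShiftSeparated_mem [TopologicalSpace A] [DiscreteTopology A]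
    {S : Set G} (hS : S.Finite) {x : G → A} (hx : ∀ h ∈ S, h ≠ 1 → shiftMap h x ≠ x) :
    ∃ W : Set (G → A), IsClopen W ∧ x ∈ W ∧ IsShiftSeparated S W := by
  choose! t ht using fun h hh h1 => Function.ne_iff.1 (hx h hh h1)
  set U : Set G := t '' S ∪ (fun h => h⁻¹ * t h) '' S
  have hU : U.Finite := (hS.image _).union (hS.image _)
  refine ⟨U.pi fun u => {x u}, isClopen_set_pi_singleton hU x, fun _ _ => rfl, ?_⟩
  intro v hv h hh h1 hhv
  apply ht h hh h1
  calc x (h⁻¹ * t h) = v (h⁻¹ * t h) := (hv _ (Or.inr ⟨h, hh, rfl⟩)).symm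
    _ = shiftMap h v (t h) := rfl
    _ = x (t h) := hhv _ (Or.inl ⟨h, hh, rfl⟩)

lemma IsShiftSeparated.union_diff {S : Set G} (hS : ∀ h ∈ S, h⁻¹ ∈ S) {V W : Set (G → A)}
    (hV : IsShiftSeparated S V) (hW : IsShiftSeparated S W) :
    IsShiftSeparated S (V ∪ (W \ ⋃ h ∈ S, shiftMap h ⁻¹' V)) := by
  rintro v (hvV | ⟨hvW, hvnew⟩) h hh h1 (hhvV | ⟨hhvW, hhvnew⟩)
  · exact hV v hvV h hh h1 hhvV
  · refine hhvnew (Set.mem_biUnion (hS h hh) ?_)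
    rwa [Set.mem_preimage, shiftMap_shiftMap, inv_mul_cancel, shiftMap_one]
  · exact hvnew (Set.mem_biUnion hh hhvV)
  · exact hW v hvW h hh h1 hhvW

lemma IsCompact.exists_isClopen_isShiftSeparated_forall_exists_shiftMap_mem
    [TopologicalSpace A] [DiscreteTopology A] {S : Set G} (hS : S.Finite) (hS1 : (1 : G) ∈ S)
    (hSinv : ∀ h ∈ S, h⁻¹ ∈ S) {X : Set (G → A)} (hX : IsCompact X)
    (hfree : ∀ x ∈ X, ∀ h ∈ S, h ≠ 1 → shiftMap h x ≠ x) :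
    ∃ V : Set (G → A), IsClopen V ∧ IsShiftSeparated S V ∧ ∀ x ∈ X, ∃ h ∈ S, shiftMap h x ∈ V := by
  -- Quantifying over the starting set `V₀` is what makes the property closed under unions.
  let P : Set (G → A) → Prop := fun Y => ∀ V₀ : Set (G → A), IsClopen V₀ → IsShiftSeparated S V₀ →
    ∃ V, V₀ ⊆ V ∧ IsClopen V ∧ IsShiftSeparated S V ∧ ∀ y ∈ Y, ∃ h ∈ S, shiftMap h y ∈ V
  suffices hP : P X by
    obtain ⟨V, -, hV⟩ := hP ∅ isClopen_empty (isShiftSeparated_empty S)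
    exact ⟨V, hV⟩
  refine hX.induction_on ?empty ?mono ?union ?nbhd
  case empty =>
    exact fun V₀ hV₀ hsep₀ => ⟨V₀, subset_rfl, hV₀, hsep₀, fun _ hy => hy.elim⟩
  case mono =>
    intro Y Z hYZ hZ V₀ hV₀ hsep₀
    obtain ⟨V, hsub, hV, hsep, hvisit⟩ := hZ V₀ hV₀ hsep₀
    exact ⟨V, hsub, hV, hsep, fun y hy => hvisit y (hYZ hy)⟩
  case union =>
    intro Y Z hY hZ V₀ hV₀ hsep₀
    obtain ⟨V₁, hsub₁, hV₁, hsep₁, hvisit₁⟩ := hY V₀ hV₀ hsep₀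
    obtain ⟨V₂, hsub₂, hV₂, hsep₂, hvisit₂⟩ := hZ V₁ hV₁ hsep₁
    refine ⟨V₂, hsub₁.trans hsub₂, hV₂, hsep₂, ?_⟩
    rintro y (hy | hy)
    · obtain ⟨h, hh, hhy⟩ := hvisit₁ y hy
      exact ⟨h, hh, hsub₂ hhy⟩
    · exact hvisit₂ y hy
  case nbhd =>
    intro x hx
    obtain ⟨W, hW, hxW, hsepW⟩ := exists_isClopen_isShiftSeparated_mem hS (hfree x hx)
    refine ⟨W, mem_nhdsWithin_of_mem_nhds (hW.isOpen.mem_nhds hxW), fun V₀ hV₀ hsep₀ => ?_⟩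
    have hhull : IsClopen (⋃ h ∈ S, shiftMap h ⁻¹' V₀) :=
      hS.isClopen_biUnion fun h _ => hV₀.preimage (continuous_shiftMap h)
    refine ⟨_, Set.subset_union_left, hV₀.union (hW.diff hhull), hsep₀.union_diff hSinv hsepW, ?_⟩
    intro y hy
    by_cases hyhull : y ∈ ⋃ h ∈ S, shiftMap h ⁻¹' V₀
    · obtain ⟨h, hh, hhy⟩ := Set.mem_iUnion₂.1 hyhull
      exact ⟨h, hh, Or.inl hhy⟩
    · exact ⟨1, hS1, by rw [shiftMap_one]; exact Or.inr ⟨hy, hyhull⟩⟩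

noncomputable def visitIndicator (V : Set (G → A)) (x : G → A) : G → Bool :=
  fun c => V.boolIndicator (shiftMap c⁻¹ x)

lemma visitIndicator_eq_true {V : Set (G → A)} {x : G → A} {c : G} :
    visitIndicator V x c = true ↔ shiftMap c⁻¹ x ∈ V :=
  (Set.mem_iff_boolIndicator _ _).symm

lemma continuous_visitIndicator [TopologicalSpace A] {V : Set (G → A)} (hV : IsClopen V) :
    Continuous (visitIndicator V) :=
  continuous_pi fun c =>
    ((continuous_boolIndicator_iff_isClopen V).2 hV).comp (continuous_shiftMap c⁻¹)

lemma visitIndicator_shiftMap (V : Set (G → A)) (g : G) (x : G → A) :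
    visitIndicator V (shiftMap g x) = shiftMap g (visitIndicator V x) := by
  funext c
  change V.boolIndicator (shiftMap c⁻¹ (shiftMap g x)) = V.boolIndicator (shiftMap (g⁻¹ * c)⁻¹ x)
  rw [shiftMap_shiftMap, mul_inv_rev, inv_inv]

lemma IsShiftSeparated.pairwise_disjoint_smul {F : Set G} {V : Set (G → A)}
    (hV : IsShiftSeparated (F * F⁻¹) V) (x : G → A) :
    {c | visitIndicator V x c = true}.Pairwise fun c c' => Disjoint (c • F) (c' • F) := by
  intro c hc c' hc' hne
  rw [Set.mem_ofPred_eq, visitIndicator_eq_true] at hc hc'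
  refine Set.disjoint_left.2 ?_
  rintro _ ⟨f, hf, rfl⟩ ⟨f', hf', hff'⟩
  have hcc' : c'⁻¹ * c = f' * f⁻¹ := by
    simp only [smul_eq_mul] at hff'
    rw [eq_mul_inv_iff_mul_eq, mul_assoc, ← hff', inv_mul_cancel_left]
  refine hV _ hc (c'⁻¹ * c) (hcc' ▸ Set.mul_mem_mul hf' (Set.inv_mem_inv.2 hf)) ?_ ?_
  · rwa [Ne, inv_mul_eq_one, eq_comm]
  · rwa [shiftMap_shiftMap, mul_inv_cancel_right]

lemma exists_visitIndicator_eq_true_mem_smul {S : Set G} {V X : Set (G → A)}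
    (hX : ∀ g : G, ∀ x ∈ X, shiftMap g x ∈ X) (hvisit : ∀ x ∈ X, ∃ h ∈ S, shiftMap h x ∈ V)
    {x : G → A} (hx : x ∈ X) (g : G) : ∃ c : G, visitIndicator V x c = true ∧ g ∈ c • S := by
  obtain ⟨h, hh, hhx⟩ := hvisit _ (hX g⁻¹ x hx)
  refine ⟨g * h⁻¹, ?_, ⟨h, hh, by simp⟩⟩
  rwa [visitIndicator_eq_true, mul_inv_rev, inv_inv, ← shiftMap_shiftMap]

end

theorem exists_quasi_tiling_homomorphism_general {G A : Type*} [Group G]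
    [TopologicalSpace A] [DiscreteTopology A] [Finite A]
    (X : Set (G → A)) (hX : IsSubshift X)
    (haper : ∀ x ∈ X, ∀ g : G, shiftMap g x = x → g = 1)
    (F : Finset G) (hF : F.Nonempty) :
    ∃ φ : (G → A) → (G → Bool), ContinuousOn φ X ∧
      (∀ g : G, ∀ x ∈ X, φ (shiftMap g x) = shiftMap g (φ x)) ∧
      ∀ x ∈ X,
        ({c : G | φ x c = true}.Pairwise fun c c' =>
          Disjoint (c • (F : Set G)) (c' • (F : Set G))) ∧
        (∀ g : G, ∃ c : G, φ x c = true ∧ g ∈ c • ((F : Set G) * (F : Set G)⁻¹)) := by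
  set S : Set G := (F : Set G) * (F : Set G)⁻¹
  have hS : S.Finite := F.finite_toSet.mul F.finite_toSet.inv
  have hS1 : (1 : G) ∈ S := by simpa [div_eq_mul_inv] using hF.to_set.one_mem_div
  have hSinv : ∀ h ∈ S, h⁻¹ ∈ S := fun h hh => by
    rwa [← Set.inv_mem_inv, mul_inv_rev, inv_inv, inv_inv]
  obtain ⟨V, hV, hsep, hvisit⟩ :=
    hX.1.isCompact.exists_isClopen_isShiftSeparated_forall_exists_shiftMap_mem hS hS1 hSinv
      fun x hx h _ h1 hfix => h1 (haper x hx h hfix)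
  exact ⟨visitIndicator V, (continuous_visitIndicator hV).continuousOn,
    fun g x _ => visitIndicator_shiftMap V g x,
    fun x hx => ⟨hsep.pairwise_disjoint_smul x, exists_visitIndicator_eq_true_mem_smul hX.2 hvisit hx⟩⟩

/-- For any countable group `G`, nonempty aperiodic subshift `X` and nonempty finite
`F ⊆ G`, there is a homomorphism `φ : X → {0,1}^G` such that for each `x ∈ X`, writing
`φ(x) = χ_𝒞`, the translates `{cF}_{c ∈ 𝒞}` are pairwise disjoint and the translates
`{cFF⁻¹}_{c ∈ 𝒞}` cover `G`. -/
theorem exists_quasi_tiling_homomorphism {G A : Type*} [Group G] [Countable G]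
    [TopologicalSpace A] [DiscreteTopology A] [Finite A]
    (X : Set (G → A)) (hX : IsSubshift X) (hXne : X.Nonempty)
    (haper : ∀ x ∈ X, ∀ g : G, shiftMap g x = x → g = 1)
    (F : Finset G) (hF : F.Nonempty) :
    ∃ φ : (G → A) → (G → Bool), ContinuousOn φ X ∧
      (∀ g : G, ∀ x ∈ X, φ (shiftMap g x) = shiftMap g (φ x)) ∧
      ∀ x ∈ X,
        ({c : G | φ x c = true}.Pairwise fun c c' =>
          Disjoint (c • (F : Set G)) (c' • (F : Set G))) ∧
        (∀ g : G, ∃ c : G, φ x c = true ∧ g ∈ c • ((F : Set G) * (F : Set G)⁻¹)) :=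
  exists_quasi_tiling_homomorphism_general X hX haper F hF
end

section
/- Let X be an aperiodic G-subshift and F ⊂ G finite. For every x ∈ X there exists a finite set S ⊂ G and a pattern u = x(S) such that the cylinder [u] satisfies [u] ∩ σ^{f⁻¹}[u] = ∅ for all f ∈ FF⁻¹ \ {e}. Consequently, by compactness, X admits a finite cover by cylinder sets [u₁], …, [u_n] each with this separation property. -/
open scoped Pointwise

theorem key_lemma {G A : Type*} [Group G]
    [TopologicalSpace A]
    (X : Set (G → A))
    (haper : ∀ x ∈ X, ∀ g : G, shiftMap g x = x → g = 1)
    (F : Finset G) :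
    ∀ x ∈ X, ∃ S : Finset G,
      ∀ f ∈ (F : Set G) * (F : Set G)⁻¹, f ≠ 1 →
        ∀ z ∈ X, ¬((∀ s ∈ S, z s = x s) ∧ (∀ s ∈ S, shiftMap f z s = x s)) := by
  classical
  intro x hx
  set E : Finset G := (F * F⁻¹).erase 1 with hE
  have hs : ∀ f : G, ∃ s : G, f ∈ E → x (f⁻¹ * s) ≠ x s := by
    intro f
    by_cases hf : f ∈ E
    · have hne : f ≠ 1 := (Finset.mem_erase.mp hf).1
      have : shiftMap f x ≠ x := fun h => hne (haper x hx f h)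
      by_contra hcon
      push_neg at hcon
      apply this
      funext h
      exact (hcon h).2
    · exact ⟨1, fun h => absurd h hf⟩
  choose s hsp using hs
  refine ⟨E.image s ∪ E.image (fun f => f⁻¹ * s f), ?_⟩
  intro f hf hf1 z hz hc
  have hfE : f ∈ E := by
    refine Finset.mem_erase.mpr ⟨hf1, ?_⟩
    have := hf
    rw [← Finset.coe_inv, ← Finset.coe_mul] at this
    exact_mod_cast this
  have h1 : z (f⁻¹ * s f) = x (f⁻¹ * s f) :=
    hc.1 _ (Finset.mem_union_right _ (Finset.mem_image_of_mem _ hfE))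
  have h2 : z (f⁻¹ * s f) = x (s f) :=
    hc.2 _ (Finset.mem_union_left _ (Finset.mem_image_of_mem _ hfE))
  exact hsp f hfE (h1 ▸ h2)

/-- For an aperiodic subshift `X` and finite `F ⊆ G`: (1) every `x ∈ X` determines a
cylinder `[u]` (with `u = x(S)` for some finite `S`) such that `[u] ∩ σ^{f⁻¹}[u] = ∅`
for all `f ∈ FF⁻¹ \ {e}`; (2) by compactness, `X` admits a finite cover by such
cylinders. -/
theorem separated_cylinders_cover {G A : Type*} [Group G] [Countable G]
    [TopologicalSpace A] [DiscreteTopology A] [Finite A]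
    (X : Set (G → A)) (hX : IsSubshift X)
    (haper : ∀ x ∈ X, ∀ g : G, shiftMap g x = x → g = 1)
    (F : Finset G) :
    (∀ x ∈ X, ∃ S : Finset G,
      ∀ f ∈ (F : Set G) * (F : Set G)⁻¹, f ≠ 1 →
        ∀ z ∈ X, ¬((∀ s ∈ S, z s = x s) ∧ (∀ s ∈ S, shiftMap f z s = x s))) ∧
    (∃ (n : ℕ) (Ss : Fin n → Finset G) (u : Fin n → (G → A)),
      (∀ i : Fin n, ∀ f ∈ (F : Set G) * (F : Set G)⁻¹, f ≠ 1 →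
        ∀ z ∈ X, ¬((∀ s ∈ Ss i, z s = u i s) ∧ (∀ s ∈ Ss i, shiftMap f z s = u i s))) ∧
      ∀ x ∈ X, ∃ i : Fin n, ∀ s ∈ Ss i, x s = u i s) := by
  classical
  have key := key_lemma X haper F
  refine ⟨key, ?_⟩
  choose S hS using key
  have hcomp : IsCompact X := hX.1.isCompact
  set U : X → Set (G → A) := fun x => Set.pi ↑(S x x.2) (fun s => {(x : G → A) s}) with hU
  have hUopen : ∀ x, IsOpen (U x) :=
    fun x => isOpen_set_pi (Finset.finite_toSet _) (fun _ _ => isOpen_discrete _)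
  have hcover : X ⊆ ⋃ x : X, U x := by
    intro y hy
    exact Set.mem_iUnion.mpr ⟨⟨y, hy⟩, fun s _ => rfl⟩
  obtain ⟨t, ht⟩ := hcomp.elim_finite_subcover U hUopen hcover
  set l := t.toList with hl
  refine ⟨l.length, fun i => S (l.get i) (l.get i).2, fun i => ((l.get i : X) : G → A),
    fun i => hS _ _, ?_⟩
  intro y hy
  obtain ⟨x, hxt, hyU⟩ := Set.mem_iUnion₂.mp (ht hy)
  obtain ⟨i, hi⟩ := List.mem_iff_get.mp (Finset.mem_toList.mpr hxt)
  subst hi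
  exact ⟨i, fun s hs => hyU s hs⟩
end

section
/- Fix a quasi-tiling 𝒞 ⊂ G with {cK^{2n₀}}_{c∈𝒞} covering G, and for g ∈ G let deg_n(g) = |{c ∈ 𝒞 : dist_K(g, cK^{2n₀}) ≤ n}|, E_{m,n} = {g : deg_n(g) ≤ m}, T_c = cK^{2n₀} ∩ E_{1,2}, and for S ⊂ 𝒞 with |S| = m ≥ 2, T_S = (∩_{c∈S} cK^{2n₀+3m-3}) ∩ E_{m,3m-1}. Then for each fixed m, the collection {T_S K}_{S ⊂ 𝒞, |S| = m} is pairwise disjoint. -/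
open scoped Pointwise

/-- `E_{m,n} = {g : deg_n(g) ≤ m}`. -/
def ESet {G : Type*} [Group G] [DecidableEq G] (K : Finset G) (C : Set G)
    (n₀ m n : ℕ) : Set G :=
  {g : G | (degSet K C n₀ n g).encard ≤ (m : ℕ∞)}

/-- For `S ⊆ 𝒞` with `|S| = m ≥ 1`, `T_S = (∩_{c ∈ S} c K^{2n₀+3m-3}) ∩ E_{m,3m-1}`
(for `m = 1` this is `T_c = c K^{2n₀} ∩ E_{1,2}`). -/
def TS {G : Type*} [Group G] [DecidableEq G] (K : Finset G) (C : Set G)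
    (n₀ : ℕ) (S : Finset G) : Set G :=
  (⋂ c ∈ S, tile K c (2 * n₀ + 3 * S.card - 3)) ∩ ESet K C n₀ S.card (3 * S.card - 1)

lemma helper {G : Type*} [Group G] [DecidableEq G] (K : Finset G) (hsym : K⁻¹ = K)
    (C : Set G) (n₀ m : ℕ) (hm : 1 ≤ m) (c x x' : G) (hc : c ∈ C)
    (hx' : c⁻¹ * x' ∈ K ^ (2 * n₀ + 3 * m - 3)) (hxx' : x⁻¹ * x' ∈ K ^ 2) :
    c ∈ degSet K C n₀ (3 * m - 1) x := by
  have heq : 2 * n₀ + 3 * m - 3 = 2 * n₀ + (3 * m - 3) := by omega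
  rw [heq, pow_add, Finset.mem_mul] at hx'
  obtain ⟨a, ha, b, hb, hab⟩ := hx'
  refine ⟨hc, c * a, ?_, ?_⟩
  · simp [tile, ha]
  · have hb' : b⁻¹ ∈ K ^ (3 * m - 3) := by
      rw [← hsym, inv_pow, Finset.mem_inv']
      simpa using hb
    have hx'eq : x' = c * (a * b) := by rw [hab]; group
    have key : x⁻¹ * (c * a) = (x⁻¹ * x') * b⁻¹ := by
      rw [hx'eq]; group
    rw [key]
    have h3 : 3 * m - 1 = 2 + (3 * m - 3) := by omega
    rw [h3, pow_add, Finset.mem_mul]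
    exact ⟨_, hxx', _, hb', rfl⟩

/-- For each fixed `m ≥ 1`, the collection `{T_S K}` over `S ⊆ 𝒞` with `|S| = m` is
pairwise disjoint. -/
theorem TS_pairwise_disjoint {G : Type*} [Group G] [DecidableEq G]
    (K : Finset G) (h1 : (1 : G) ∈ K) (hsym : K⁻¹ = K)
    (n₀ : ℕ) (C : Set G)
    (hcover : ∀ g : G, ∃ c ∈ C, g ∈ tile K c (2 * n₀)) :
    ∀ m : ℕ, 1 ≤ m → ∀ S S' : Finset G, ↑S ⊆ C → ↑S' ⊆ C →
      S.card = m → S'.card = m → S ≠ S' →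
      Disjoint (TS K C n₀ S * (K : Set G)) (TS K C n₀ S' * (K : Set G)) := by
  intro m hm S S' hS hS' hcard hcard' hne
  rw [Set.disjoint_left]
  rintro g ⟨x, hx, k, hk, rfl⟩ ⟨x', hx', k', hk', hgeq⟩
  apply hne
  obtain ⟨hx1, hx2⟩ := hx
  obtain ⟨hx'1, hx'2⟩ := hx'
  have hxx' : x⁻¹ * x' ∈ K ^ 2 := by
    have : x⁻¹ * x' = k * k'⁻¹ := by
      have : x * k = x' * k' := hgeq.symm
      rw [eq_comm, mul_inv_eq_iff_eq_mul, mul_assoc, ← this]; group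
    rw [this, sq, Finset.mem_mul]
    refine ⟨k, hk, k'⁻¹, ?_, rfl⟩
    rw [← hsym, Finset.mem_inv']; simpa using hk'
  have hdS : (↑S : Set G) ⊆ degSet K C n₀ (3 * m - 1) x := by
    intro c hc
    refine helper K hsym C n₀ m hm c x x (hS hc) ?_ ?_
    · have := Set.mem_iInter₂.mp hx1 c hc
      simpa [tile, hcard] using this
    · simp only [inv_mul_cancel]
      rw [sq, Finset.mem_mul]; exact ⟨1, h1, 1, h1, by simp⟩
  have hdS' : (↑S' : Set G) ⊆ degSet K C n₀ (3 * m - 1) x := by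
    intro c hc
    refine helper K hsym C n₀ m hm c x x' (hS' hc) ?_ hxx'
    have := Set.mem_iInter₂.mp hx'1 c hc
    simpa [tile, hcard'] using this
  have hE : (degSet K C n₀ (3 * m - 1) x).encard ≤ (m : ℕ∞) := by
    have := hx2
    simp only [ESet, Set.mem_setOf_eq, hcard] at this
    exact this
  have hunion : (↑(S ∪ S') : Set G) ⊆ degSet K C n₀ (3 * m - 1) x := by
    rw [Finset.coe_union]
    exact Set.union_subset hdS hdS'
  have hcardu : (S ∪ S').card ≤ m := by
    have := (Set.encard_le_encard hunion).trans hE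
    rwa [Set.encard_coe_eq_coe_finsetCard, Nat.cast_le] at this
  have e1 : S = S ∪ S' :=
    Finset.eq_of_subset_of_card_le Finset.subset_union_left (by omega)
  have e2 : S' = S ∪ S' :=
    Finset.eq_of_subset_of_card_le Finset.subset_union_right (by omega)
  exact e1.trans e2.symm
end

section
/- With 𝒞, deg_n, E_{m,n}, T_c, T_S as defined (and U₁ = ∪_c T_c, V₁ = int_K(U₁), U_m = (∪_{|S|=m} T_S) ∪ V_{m-1}, V_m = int_K(U_m) for m ≥ 2), one has U_m ⊇ E_{m,3m-1} and V_m ⊇ E_{m,3m} for all m ∈ [1, m₀]. -/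
open scoped Pointwise

/-- `int_K(E) = {g ∈ E : gK ⊆ E}`. -/
def intK {G : Type*} [Group G] (K : Finset G) (E : Set G) : Set G :=
  {g ∈ E | ∀ k ∈ K, g * k ∈ E}

/-- The sets `U_m`: `U_1 = ⋃_c T_c` and `U_{m+1} = (⋃_{|S|=m+1} T_S) ∪ int_K(U_m)`. -/
def USet {G : Type*} [Group G] [DecidableEq G] (K : Finset G) (C : Set G)
    (n₀ : ℕ) : ℕ → Set G
  | 0 => ∅
  | m + 1 =>
      (⋃ S ∈ {S : Finset G | ↑S ⊆ C ∧ S.card = m + 1}, TS K C n₀ S) ∪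
        intK K (USet K C n₀ m)

/-- The sets `V_m = int_K(U_m)`. -/
def VSet {G : Type*} [Group G] [DecidableEq G] (K : Finset G) (C : Set G)
    (n₀ m : ℕ) : Set G :=
  intK K (USet K C n₀ m)

section Aux
variable {G : Type*} [Group G] [DecidableEq G]

/-- Monotonicity of `degSet` in `n`. -/
lemma degSet_mono (K : Finset G) (h1 : (1 : G) ∈ K) (C : Set G) (n₀ : ℕ)
    {n n' : ℕ} (h : n ≤ n') (g : G) :
    degSet K C n₀ n g ⊆ degSet K C n₀ n' g := by
  rintro c ⟨hc, s, hs, hgs⟩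
  exact ⟨hc, s, hs, Finset.pow_subset_pow_right h1 h hgs⟩

/-- Shift: the `degSet` of `g * k` with parameter `n` is contained in that of `g` with `n+1`. -/
lemma degSet_shift (K : Finset G) (C : Set G) (n₀ : ℕ) {n : ℕ} (g k : G)
    (hk : k ∈ K) :
    degSet K C n₀ n (g * k) ⊆ degSet K C n₀ (n + 1) g := by
  rintro c ⟨hc, s, hs, hgs⟩
  refine ⟨hc, s, hs, ?_⟩
  have h : g⁻¹ * s = k * ((g * k)⁻¹ * s) := by group
  rw [h, pow_succ']
  exact Finset.mul_mem_mul hk hgs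

lemma mem_tile_of_mem_degSet (K : Finset G) (hsym : K⁻¹ = K) (C : Set G)
    (n₀ n : ℕ) {g c : G} (hc : c ∈ degSet K C n₀ n g) :
    g ∈ tile K c (2 * n₀ + n) := by
  obtain ⟨-, s, hs, hgs⟩ := hc
  have h2 : (g⁻¹ * s)⁻¹ ∈ K ^ n := by
    rw [← hsym, inv_pow]
    exact Finset.inv_mem_inv hgs
  have h : c⁻¹ * g = (c⁻¹ * s) * (g⁻¹ * s)⁻¹ := by group
  show c⁻¹ * g ∈ K ^ (2 * n₀ + n)
  rw [h, pow_add]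
  exact Finset.mul_mem_mul hs h2

/-- From the `U` containment we deduce the `V` containment. -/
lemma V_of_U (K : Finset G) (h1 : (1 : G) ∈ K) (C : Set G) (n₀ : ℕ)
    {m : ℕ} (hm : 1 ≤ m)
    (hU : ESet K C n₀ m (3 * m - 1) ⊆ USet K C n₀ m) :
    ESet K C n₀ m (3 * m) ⊆ VSet K C n₀ m := by
  intro g hg
  have e : 3 * m - 1 + 1 = 3 * m := by omega
  refine ⟨hU ?_, fun k hk => hU ?_⟩
  · exact le_trans (Set.encard_mono (degSet_mono K h1 C n₀ (by omega) g)) hg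
  · refine le_trans (Set.encard_mono ?_) hg
    have := degSet_shift K C n₀ (n := 3 * m - 1) g k hk
    rwa [e] at this

end Aux

/-- Containment lemma: `U_m ⊇ E_{m,3m-1}` and `V_m ⊇ E_{m,3m}` for all `m ∈ [1, m₀]`. -/
theorem USet_VSet_contain {G : Type*} [Group G] [DecidableEq G]
    (K : Finset G) (h1 : (1 : G) ∈ K) (hsym : K⁻¹ = K)
    (n₀ m₀ : ℕ) (C : Set G)
    (hcover : ∀ g : G, ∃ c ∈ C, g ∈ tile K c (2 * n₀)) :
    ∀ m : ℕ, 1 ≤ m → m ≤ m₀ →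
      ESet K C n₀ m (3 * m - 1) ⊆ USet K C n₀ m ∧
      ESet K C n₀ m (3 * m) ⊆ VSet K C n₀ m := by
  have main : ∀ m : ℕ, 1 ≤ m →
      ESet K C n₀ m (3 * m - 1) ⊆ USet K C n₀ m ∧
      ESet K C n₀ m (3 * m) ⊆ VSet K C n₀ m := by
    intro m
    induction m with
    | zero => omega
    | succ m ih =>
      intro _
      have hU : ESet K C n₀ (m + 1) (3 * (m + 1) - 1) ⊆ USet K C n₀ (m + 1) := by
        rcases Nat.eq_zero_or_pos m with rfl | hm
        · -- base case m = 1
          intro g hg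
          obtain ⟨c, hcC, hgc⟩ := hcover g
          refine Or.inl (Set.mem_iUnion₂.mpr ⟨({c} : Finset G), ⟨by simpa using hcC, by simp⟩, ?_, ?_⟩)
          · refine Set.mem_iInter₂.mpr fun c' hc' => ?_
            rw [Finset.mem_singleton] at hc'
            have e : 2 * n₀ + 3 * ({c} : Finset G).card - 3 = 2 * n₀ := by simp
            rw [hc', e]
            exact hgc
          · simpa using hg
        · -- inductive step, m ≥ 1
          intro g hg
          by_cases h : (degSet K C n₀ (3 * m) g).encard ≤ (m : ℕ∞)
          · exact Or.inr ((ih hm).2 h)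
          · have hlt : ((m + 1 : ℕ) : ℕ∞) ≤ (degSet K C n₀ (3 * m) g).encard := by
              push_cast
              exact Order.add_one_le_of_lt (lt_of_not_ge h)
            obtain ⟨t, hts, ht⟩ := Set.exists_subset_encard_eq hlt
            have htfin : t.Finite := Set.finite_of_encard_eq_coe ht
            set S : Finset G := htfin.toFinset with hS
            have hScoe : (S : Set G) = t := htfin.coe_toFinset
            have hScard : S.card = m + 1 := by
              have := ht
              rw [← hScoe, Set.encard_coe_eq_coe_finsetCard] at this
              exact_mod_cast this
            have hSdeg : ∀ c ∈ S, c ∈ degSet K C n₀ (3 * m) g := by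
              intro c hc
              exact hts (by rw [← hScoe]; exact_mod_cast hc)
            refine Or.inl (Set.mem_iUnion₂.mpr ⟨S, ⟨?_, hScard⟩, ?_, ?_⟩)
            · intro c hc
              exact (hSdeg c (by exact_mod_cast hc)).1
            · refine Set.mem_iInter₂.mpr fun c hc => ?_
              have := mem_tile_of_mem_degSet K hsym C n₀ (3 * m) (hSdeg c hc)
              have e : 2 * n₀ + 3 * S.card - 3 = 2 * n₀ + 3 * m := by
                rw [hScard]; omega
              rwa [e]
            · rw [hScard]
              exact hg
      exact ⟨hU, V_of_U K h1 C n₀ (by omega) hU⟩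
  intro m hm _
  exact main m hm
end
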